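/- For n ≥ 2, the map φ ↦ (φ(e₁), φ(e₂)) is a bijection from the set 𝓜(A_2; A_n) of algebra monomorphisms A_2 = ℍ → A_n onto {(a,b) ∈ V_{2^n−1,2} : (a,a,b) = 0 and (a,b,b) = 0}. In particular, since every pair of elements of A_2 and of A_3 alternates strongly, Aut(A_2) = 𝓜(A_2;A_2) corresponds to V_{3,2} ≅ SO(3) and 𝓜(A_2; A_3) corresponds to V_{7,2}. -/

import Mathlib

noncomputable section

/-- The Cayley–Dickson algebra `A n` of dimension `2^n` over `ℝ`:
`A 0 = ℝ` and `A (n+1) = A n × A n`. -/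
def CD : ℕ → Type
  | 0 => ℝ
  | n + 1 => CD n × CD n

namespace CD

instance instAddCommGroup : (n : ℕ) → AddCommGroup (CD n)
  | 0 => inferInstanceAs (AddCommGroup ℝ)
  | n + 1 =>
    letI := instAddCommGroup n
    inferInstanceAs (AddCommGroup (CD n × CD n))

instance instModule : (n : ℕ) → Module ℝ (CD n)
  | 0 => inferInstanceAs (Module ℝ ℝ)
  | n + 1 =>
    letI := instAddCommGroup n
    letI := instModule n
    inferInstanceAs (Module ℝ (CD n × CD n))

/-- Conjugation: `x̄ = x` on `ℝ` and `(x₁,x₂)‾ = (x̄₁, -x₂)`. -/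
protected def conj : {n : ℕ} → CD n → CD n
  | 0, x => x
  | _ + 1, x => (CD.conj x.1, -x.2)

/-- Cayley–Dickson multiplication: `(a,b)(x,y) = (ax - ȳb, ya + bx̄)`. -/
protected def mul : {n : ℕ} → CD n → CD n → CD n
  | 0, x, y => (show ℝ from x) * (show ℝ from y)
  | _ + 1, x, y =>
    (CD.mul x.1 y.1 - CD.mul (CD.conj y.2) x.2,
     CD.mul y.2 x.1 + CD.mul x.2 (CD.conj y.1))

instance instMul (n : ℕ) : Mul (CD n) := ⟨CD.mul⟩

/-- The multiplicative unit `e₀` of `A n`. -/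
def e0 : (n : ℕ) → CD n
  | 0 => (1 : ℝ)
  | n + 1 => (e0 n, 0)

/-- The element `ẽ₀ = (0, e₀)` of `A n` (junk value `0` for `n = 0`). -/
def te0 : (n : ℕ) → CD n
  | 0 => 0
  | n + 1 => (0, e0 n)

/-- The "complexification" `α̃ = (-b, a)` of `α = (a,b)` (junk value `0` for `n = 0`);
note `α̃ = α·ẽ₀`. -/
def tilde : {n : ℕ} → CD n → CD n
  | 0, _ => 0
  | _ + 1, x => (-x.2, x.1)

/-- The standard inner product on `A n ≅ ℝ^{2^n}`. -/
protected def inner : {n : ℕ} → CD n → CD n → ℝ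
  | 0, x, y => (show ℝ from x) * (show ℝ from y)
  | _ + 1, x, y => CD.inner x.1 y.1 + CD.inner x.2 y.2

/-- The euclidean norm on `A n`. -/
protected def norm {n : ℕ} (x : CD n) : ℝ := Real.sqrt (CD.inner x x)

/-- `x` is pure if its trace `t(x) = x + x̄` vanishes. -/
def IsPure {n : ℕ} (x : CD n) : Prop := x + CD.conj x = 0

/-- `x = (a,b)` is doubly pure if both `a` and `b` are pure
(equivalently, both `x` and `x̃` are pure). -/
def IsDoublyPure : {n : ℕ} → CD n → Prop
  | 0, x => x = 0
  | _ + 1, x => IsPure x.1 ∧ IsPure x.2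

/-- The associator `(x,y,z) = (xy)z - x(yz)`. -/
def assoc {n : ℕ} (x y z : CD n) : CD n := (x * y) * z - x * (y * z)

/-- The subspace `ℍ_a`: the real span of `{e₀, ã, a, ẽ₀}`. -/
def Ha {n : ℕ} (a : CD n) : Submodule ℝ (CD n) :=
  Submodule.span ℝ {e0 n, tilde a, a, te0 n}

/-- The orthogonal complement `ℍ_a^⊥` of `ℍ_a` in `A n`. -/
def HaPerp {n : ℕ} (a : CD n) : Set (CD n) :=
  {x | ∀ y ∈ Ha a, CD.inner x y = 0}

/-- The element `ε = (ẽ₀, 0)` of `A (n+1)`. -/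
def eps (n : ℕ) : CD (n + 1) := (te0 n, 0)

/-- `α̂ = (b,a)` for `α = (a,b) ∈ A (n+1)`. -/
def hat {n : ℕ} (x : CD (n + 1)) : CD (n + 1) := (x.2, x.1)

/-- The element `(a, b)` of `A (n+1) = A n × A n`. -/
def pair {n : ℕ} (a b : CD n) : CD (n + 1) := (a, b)

end CD

/-- An algebra monomorphism `A m → A n`: an injective `ℝ`-linear map preserving
the unit and multiplication. -/
def IsMono {m n : ℕ} (φ : CD m →ₗ[ℝ] CD n) : Prop :=
  Function.Injective φ ∧ φ (CD.e0 m) = CD.e0 n ∧ ∀ x y, φ (x * y) = φ x * φ y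

/-- The canonical basis vector `e₁` of `A 2 = ℍ`. -/
def q1 : CD 2 := (CD.te0 1, 0)
/-- The canonical basis vector `e₂` of `A 2 = ℍ`. -/
def q2 : CD 2 := (0, CD.e0 1)
/-- The canonical basis vector `e₃` of `A 2 = ℍ`. -/
def q3 : CD 2 := (0, CD.te0 1)

/-- The real Stiefel manifold `V_{2^n-1,2}`: pairs of orthonormal pure elements of `A n`. -/
def V (n : ℕ) : Set (CD n × CD n) :=
  {p | CD.IsPure p.1 ∧ CD.IsPure p.2 ∧
    CD.norm p.1 = 1 ∧ CD.norm p.2 = 1 ∧ CD.inner p.1 p.2 = 0}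

/-!
A monomorphism `φ : ℍ → A_n` sends `e₁, e₂` to elements `a, b` with `a² = b² = -e₀` and
`ab + ba = 0`; in any Cayley–Dickson algebra `x² = -e₀` forces `x` to be a pure unit vector, and
for pure `x, y` one has `xy + yx = -2⟨x, y⟩ e₀`, so `(a, b) ∈ V`, and it alternates strongly
because `ℍ` is associative. Conversely, for such a pair strong alternativity gives
`a(ab) = -b` and `(ab)b = -a`, and the adjunction `⟨xy, z⟩ = ⟨y, x̄z⟩` shows that `c = ab` is a
pure unit vector orthogonal to `a` and `b`; hence `a, b, c` multiply like `i, j, k`, and the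
linear map `ℍ → A_n` sending `1, i, j, k` to `e₀, a, b, c` is a unital homomorphism, injective
because `x x̄ = ‖x‖² e₀`. A unital linear map on `ℍ` is determined by the images of `e₁, e₂` and
their product, which gives injectivity of `φ ↦ (φ e₁, φ e₂)`.
-/

namespace CD

variable {n : ℕ}

section Coordinates

/-- `A_0` is `ℝ`; going through `toReal` lets `simp` and `ring` compute in coordinates. -/
def toReal (x : CD 0) : ℝ := x

@[ext] lemma ext_zero {x y : CD 0} (h : toReal x = toReal y) : x = y := h
@[ext] lemma ext {x y : CD (n + 1)} (h₁ : x.1 = y.1) (h₂ : x.2 = y.2) : x = y := Prod.ext h₁ h₂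

@[simp] lemma toReal_add (x y : CD 0) : toReal (x + y) = toReal x + toReal y := rfl
@[simp] lemma toReal_neg (x : CD 0) : toReal (-x) = -toReal x := rfl
@[simp] lemma toReal_sub (x y : CD 0) : toReal (x - y) = toReal x - toReal y := rfl
@[simp] lemma toReal_smul (r : ℝ) (x : CD 0) : toReal (r • x) = r * toReal x := rfl
@[simp] lemma toReal_zero : toReal 0 = 0 := rfl
@[simp] lemma toReal_mul (x y : CD 0) : toReal (x * y) = toReal x * toReal y := rfl
@[simp] lemma toReal_e0 : toReal (e0 0) = 1 := rfl
@[simp] lemma conj_zero_eq (x : CD 0) : CD.conj x = x := rfl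
lemma inner_zero_eq (x y : CD 0) : CD.inner x y = toReal x * toReal y := rfl

@[simp] lemma add_fst (x y : CD (n + 1)) : (x + y).1 = x.1 + y.1 := rfl
@[simp] lemma add_snd (x y : CD (n + 1)) : (x + y).2 = x.2 + y.2 := rfl
@[simp] lemma neg_fst (x : CD (n + 1)) : (-x).1 = -x.1 := rfl
@[simp] lemma neg_snd (x : CD (n + 1)) : (-x).2 = -x.2 := rfl
@[simp] lemma sub_fst (x y : CD (n + 1)) : (x - y).1 = x.1 - y.1 := rfl
@[simp] lemma sub_snd (x y : CD (n + 1)) : (x - y).2 = x.2 - y.2 := rfl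
@[simp] lemma smul_fst (r : ℝ) (x : CD (n + 1)) : (r • x).1 = r • x.1 := rfl
@[simp] lemma smul_snd (r : ℝ) (x : CD (n + 1)) : (r • x).2 = r • x.2 := rfl
@[simp] lemma zero_fst : (0 : CD (n + 1)).1 = 0 := rfl
@[simp] lemma zero_snd : (0 : CD (n + 1)).2 = 0 := rfl
@[simp] lemma mul_fst (x y : CD (n + 1)) : (x * y).1 = x.1 * y.1 - CD.conj y.2 * x.2 := rfl
@[simp] lemma mul_snd (x y : CD (n + 1)) : (x * y).2 = y.2 * x.1 + x.2 * CD.conj y.1 := rfl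
@[simp] lemma conj_fst (x : CD (n + 1)) : (CD.conj x).1 = CD.conj x.1 := rfl
@[simp] lemma conj_snd (x : CD (n + 1)) : (CD.conj x).2 = -x.2 := rfl
@[simp] lemma e0_fst : (e0 (n + 1)).1 = e0 n := rfl
@[simp] lemma e0_snd : (e0 (n + 1)).2 = 0 := rfl
@[simp] lemma te0_fst : (te0 (n + 1)).1 = 0 := rfl
@[simp] lemma te0_snd : (te0 (n + 1)).2 = e0 n := rfl
lemma inner_succ (x y : CD (n + 1)) : CD.inner x y = CD.inner x.1 y.1 + CD.inner x.2 y.2 := rfl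

end Coordinates

section Conj

lemma conj_add (x y : CD n) : CD.conj (x + y) = CD.conj x + CD.conj y := by
  induction n with
  | zero => rfl
  | succ n ih => ext <;> simp [ih, add_comm]

lemma conj_smul (r : ℝ) (x : CD n) : CD.conj (r • x) = r • CD.conj x := by
  induction n with
  | zero => rfl
  | succ n ih => ext <;> simp [ih]

@[simp] lemma conj_conj (x : CD n) : CD.conj (CD.conj x) = x := by
  induction n with
  | zero => rfl
  | succ n ih => ext <;> simp [ih]

@[simp] lemma conj_e0 : CD.conj (e0 n) = e0 n := by
  induction n with
  | zero => rfl
  | succ n ih => ext <;> simp [ih]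

def conjLinear (n : ℕ) : CD n →ₗ[ℝ] CD n where
  toFun := CD.conj
  map_add' := conj_add
  map_smul' := conj_smul

@[simp] lemma conj_neg (x : CD n) : CD.conj (-x) = -CD.conj x := (conjLinear n).map_neg x
@[simp] lemma conj_sub (x y : CD n) : CD.conj (x - y) = CD.conj x - CD.conj y :=
  (conjLinear n).map_sub x y
@[simp] lemma conj_zero : CD.conj (0 : CD n) = 0 := (conjLinear n).map_zero

end Conj

section Multiplication

lemma mul_add_and_add_mul (x y z : CD n) :
    x * (y + z) = x * y + x * z ∧ (x + y) * z = x * z + y * z := by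
  induction n with
  | zero => exact ⟨mul_add (toReal x) y z, add_mul (toReal x) y z⟩
  | succ n ih =>
    constructor <;> ext <;> simp only [add_fst, add_snd, mul_fst, mul_snd, conj_add, ih] <;> abel

lemma smul_mul_and_mul_smul (r : ℝ) (x y : CD n) :
    (r • x) * y = r • (x * y) ∧ x * (r • y) = r • (x * y) := by
  induction n with
  | zero => exact ⟨smul_mul_assoc r (toReal x) y, mul_smul_comm r (toReal x) y⟩
  | succ n ih => constructor <;> ext <;> simp [conj_smul, ih, smul_sub, smul_add]

scoped instance instNonUnitalNonAssocRing (n : ℕ) : NonUnitalNonAssocRing (CD n) :=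
  { instAddCommGroup n, instMul n with
    left_distrib := fun x y z => (mul_add_and_add_mul x y z).1
    right_distrib := fun x y z => (mul_add_and_add_mul x y z).2
    zero_mul := fun x => by simpa using (smul_mul_and_mul_smul 0 0 x).1
    mul_zero := fun x => by simpa using (smul_mul_and_mul_smul 0 x 0).2 }

scoped instance : IsScalarTower ℝ (CD n) (CD n) :=
  ⟨fun r x y => (smul_mul_and_mul_smul r x y).1⟩

scoped instance : SMulCommClass ℝ (CD n) (CD n) :=
  ⟨fun r x y => (smul_mul_and_mul_smul r x y).2.symm⟩

@[simp] lemma mul_e0 (x : CD n) : x * e0 n = x := by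
  induction n with
  | zero => exact mul_one (toReal x)
  | succ n ih => ext <;> simp [ih]

@[simp] lemma e0_mul (x : CD n) : e0 n * x = x := by
  induction n with
  | zero => exact one_mul (toReal x)
  | succ n ih => ext <;> simp [ih]

lemma conj_mul (x y : CD n) : CD.conj (x * y) = CD.conj y * CD.conj x := by
  induction n with
  | zero => exact mul_comm (toReal x) y
  | succ n ih => ext <;> simp [ih]

end Multiplication

section Inner

lemma inner_comm (x y : CD n) : CD.inner x y = CD.inner y x := by
  induction n with
  | zero => exact mul_comm (toReal x) y
  | succ n ih => simp only [inner_succ, ih]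

lemma inner_add_left (x y z : CD n) : CD.inner (x + y) z = CD.inner x z + CD.inner y z := by
  induction n with
  | zero => exact add_mul (toReal x) y z
  | succ n ih => simp only [inner_succ, add_fst, add_snd, ih]; ring

lemma inner_smul_left (r : ℝ) (x y : CD n) : CD.inner (r • x) y = r * CD.inner x y := by
  induction n with
  | zero => exact mul_assoc r (toReal x) y
  | succ n ih => simp only [inner_succ, smul_fst, smul_snd, ih]; ring

lemma inner_add_right (x y z : CD n) : CD.inner x (y + z) = CD.inner x y + CD.inner x z := by
  rw [inner_comm, inner_add_left, inner_comm y, inner_comm z]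

lemma inner_smul_right (r : ℝ) (x y : CD n) : CD.inner x (r • y) = r * CD.inner x y := by
  rw [inner_comm, inner_smul_left, inner_comm y]

lemma inner_neg_left (x y : CD n) : CD.inner (-x) y = -CD.inner x y := by
  simpa using inner_smul_left (-1) x y

lemma inner_neg_right (x y : CD n) : CD.inner x (-y) = -CD.inner x y := by
  simpa using inner_smul_right (-1) x y

lemma inner_sub_left (x y z : CD n) : CD.inner (x - y) z = CD.inner x z - CD.inner y z := by
  rw [sub_eq_add_neg, inner_add_left, inner_neg_left, sub_eq_add_neg]

lemma inner_zero_left (x : CD n) : CD.inner 0 x = 0 := by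
  simpa using inner_smul_left 0 0 x

lemma inner_zero_right (x : CD n) : CD.inner x 0 = 0 := by
  simpa using inner_smul_right 0 x 0

@[simp] lemma inner_e0_e0 : CD.inner (e0 n) (e0 n) = 1 := by
  induction n with
  | zero => exact mul_one 1
  | succ n ih => simp [inner_succ, ih, inner_zero_right]

@[simp] lemma inner_conj_conj (x y : CD n) : CD.inner (CD.conj x) (CD.conj y) = CD.inner x y := by
  induction n with
  | zero => rfl
  | succ n ih => simp [inner_succ, ih, inner_neg_left, inner_neg_right]

lemma inner_self_nonneg (x : CD n) : 0 ≤ CD.inner x x := by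
  induction n with
  | zero => exact mul_self_nonneg (toReal x)
  | succ n ih => exact add_nonneg (ih x.1) (ih x.2)

lemma eq_zero_of_inner_self_eq_zero {x : CD n} (h : CD.inner x x = 0) : x = 0 := by
  induction n with
  | zero => exact ext_zero (mul_self_eq_zero.mp (h : toReal x * toReal x = 0))
  | succ n ih =>
    rw [inner_succ] at h
    have h₁ := inner_self_nonneg x.1
    have h₂ := inner_self_nonneg x.2
    exact ext (ih (by linarith)) (ih (by linarith))

/-- The two adjunction identities `⟨xy, z⟩ = ⟨y, x̄z⟩ = ⟨x, zȳ⟩` have to be proved together,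
since the inductive step of each uses both. -/
lemma inner_mul_left_and_right (x y z : CD n) :
    CD.inner (x * y) z = CD.inner y (CD.conj x * z) ∧
      CD.inner (x * y) z = CD.inner x (z * CD.conj y) := by
  induction n with
  | zero =>
    simp only [inner_zero_eq, toReal_mul, conj_zero_eq]
    constructor <;> ring
  | succ n ih =>
    have h₁ := (ih x.1 y.1 z.1).1
    have h₂ := (ih (CD.conj y.2) x.2 z.1).1
    have h₃ := (ih y.2 x.1 z.2).2
    have h₄ := (ih x.2 (CD.conj y.1) z.2).2
    have h₅ : CD.inner y.1 (CD.conj z.2 * x.2) = CD.inner x.2 (z.2 * y.1) := by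
      rw [inner_comm, (ih _ _ _).1, conj_conj]
    have h₆ : CD.inner y.2 (x.2 * CD.conj z.1) = CD.inner x.2 (y.2 * z.1) := by
      rw [inner_comm, (ih _ _ _).2, conj_conj]
    have h₇ := (ih x.1 y.1 z.1).2
    have h₈ := (ih y.2 x.1 z.2).1
    simp only [conj_conj] at h₂ h₄
    simp only [inner_succ, mul_fst, mul_snd, conj_fst, conj_snd, conj_neg, conj_conj,
      inner_add_left, inner_sub_left, inner_add_right, neg_mul, mul_neg, inner_neg_right,
      sub_neg_eq_add]
    constructor <;> linarith

lemma inner_mul_left (x y z : CD n) : CD.inner (x * y) z = CD.inner y (CD.conj x * z) :=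
  (inner_mul_left_and_right x y z).1

lemma add_conj (x : CD n) : x + CD.conj x = (2 * CD.inner x (e0 n)) • e0 n := by
  induction n with
  | zero => ext; simp [inner_zero_eq]; ring
  | succ n ih => ext <;> simp [ih, inner_succ, inner_zero_right]

lemma mul_conj_self (x : CD n) : x * CD.conj x = CD.inner x x • e0 n := by
  induction n with
  | zero => ext; simp [inner_zero_eq]
  | succ n ih =>
    ext
    · simpa [ih, inner_succ, add_smul] using ih (CD.conj x.2)
    · simp

end Inner

section ImaginaryUnits

lemma eq_zero_of_smul_e0_eq_zero {r : ℝ} (h : r • e0 n = 0) : r = 0 := by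
  simpa [inner_smul_left, inner_zero_left] using congrArg (CD.inner · (e0 n)) h

lemma isPure_iff_inner_e0 {x : CD n} : IsPure x ↔ CD.inner x (e0 n) = 0 := by
  rw [IsPure, add_conj]
  constructor
  · intro h
    linarith [eq_zero_of_smul_e0_eq_zero h]
  · intro h
    simp [h]

lemma IsPure.conj_eq {x : CD n} (h : IsPure x) : CD.conj x = -x :=
  eq_neg_of_add_eq_zero_right h

lemma IsPure.add {x y : CD n} (hx : IsPure x) (hy : IsPure y) : IsPure (x + y) := by
  rw [isPure_iff_inner_e0] at *
  rw [inner_add_left, hx, hy, add_zero]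

lemma mul_self_eq (x : CD n) :
    x * x = (2 * CD.inner x (e0 n)) • x - CD.inner x x • e0 n := by
  have h := mul_conj_self x
  rw [eq_sub_of_add_eq' (add_conj x), mul_sub, mul_smul_comm, mul_e0] at h
  linear_combination (norm := module) -h

lemma IsPure.mul_self {x : CD n} (h : IsPure x) : x * x = -(CD.inner x x • e0 n) := by
  rw [mul_self_eq, isPure_iff_inner_e0.mp h]
  simp

lemma IsPure.mul_add_mul_comm {x y : CD n} (hx : IsPure x) (hy : IsPure y) :
    x * y + y * x = -((2 * CD.inner x y) • e0 n) := by
  have h := (hx.add hy).mul_self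
  rw [mul_add, add_mul, add_mul, hx.mul_self, hy.mul_self, inner_add_left, inner_add_right,
    inner_add_right, inner_comm y x] at h
  linear_combination (norm := module) h

lemma IsPure.mul_comm_eq_neg {x y : CD n} (hx : IsPure x) (hy : IsPure y)
    (hxy : CD.inner x y = 0) : y * x = -(x * y) := by
  have h := hx.mul_add_mul_comm hy
  rw [hxy] at h
  linear_combination (norm := module) h

/-- A square root of `-e₀` is a pure unit vector: otherwise its real part `t ≠ 0` would force
it to be real, from `x² = 2t x - ‖x‖² e₀`. -/
lemma mul_self_eq_neg_e0_iff {x : CD n} : x * x = -e0 n ↔ IsPure x ∧ CD.inner x x = 1 := by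
  constructor
  · intro h
    have key : (2 * CD.inner x (e0 n)) • x = (CD.inner x x - 1) • e0 n := by
      have := mul_self_eq x
      rw [h] at this
      linear_combination (norm := module) -this
    have ht : 2 * CD.inner x (e0 n) * CD.inner x (e0 n) = CD.inner x x - 1 := by
      simpa [inner_smul_left] using congrArg (CD.inner · (e0 n)) key
    have hpure : CD.inner x (e0 n) = 0 := by
      by_contra ht0
      obtain ⟨s, rfl⟩ : ∃ s : ℝ, x = s • e0 n :=
        ⟨(2 * CD.inner x (e0 n))⁻¹ * (CD.inner x x - 1), by
          rw [mul_smul, ← key, smul_smul, inv_mul_cancel₀ (by simpa using ht0), one_smul]⟩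
      simp only [inner_smul_left, inner_smul_right, inner_e0_e0, mul_one] at ht
      nlinarith [sq_nonneg s]
    exact ⟨isPure_iff_inner_e0.mpr hpure, by rw [hpure] at ht; linarith⟩
  · rintro ⟨hx, hxx⟩
    rw [hx.mul_self, hxx, one_smul]

lemma norm_eq_one_iff {x : CD n} : CD.norm x = 1 ↔ CD.inner x x = 1 := Real.sqrt_eq_one

end ImaginaryUnits

section QuaternionTriples

structure IsQuaternionTriple (a b c : CD n) : Prop where
  a_mul_a : a * a = -e0 n
  b_mul_b : b * b = -e0 n
  c_mul_c : c * c = -e0 n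
  a_mul_b : a * b = c
  b_mul_a : b * a = -c
  b_mul_c : b * c = a
  c_mul_b : c * b = -a
  c_mul_a : c * a = b
  a_mul_c : a * c = -b

/-- `c = ab` is again a pure unit vector orthogonal to `a` and `b`, so the missing products
follow from anticommutativity of orthogonal pure elements. -/
theorem isQuaternionTriple_mul {a b : CD n} (ha : IsPure a) (hb : IsPure b)
    (haa : CD.inner a a = 1) (hbb : CD.inner b b = 1) (hab : CD.inner a b = 0)
    (h₁ : assoc a a b = 0) (h₂ : assoc a b b = 0) : IsQuaternionTriple a b (a * b) := by
  have sq_a : a * a = -e0 n := mul_self_eq_neg_e0_iff.mpr ⟨ha, haa⟩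
  have sq_b : b * b = -e0 n := mul_self_eq_neg_e0_iff.mpr ⟨hb, hbb⟩
  have hba : b * a = -(a * b) := ha.mul_comm_eq_neg hb hab
  have hac : a * (a * b) = -b := by
    rw [← sub_eq_zero.mp h₁, sq_a, neg_mul, e0_mul]
  have hcb : (a * b) * b = -a := by
    rw [sub_eq_zero.mp h₂, sq_b, mul_neg, mul_e0]
  have hc : IsPure (a * b) := by
    rw [IsPure, conj_mul, ha.conj_eq, hb.conj_eq, neg_mul_neg, hba, add_neg_cancel]
  have hca : CD.inner (a * b) a = 0 := by
    rw [inner_mul_left, ha.conj_eq, neg_mul, sq_a, neg_neg]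
    exact isPure_iff_inner_e0.mp hb
  have hcb' : CD.inner (a * b) b = 0 := by
    rw [← neg_neg (a * b), ← hba, inner_neg_left, inner_mul_left, hb.conj_eq, neg_mul, sq_b,
      neg_neg, isPure_iff_inner_e0.mp ha, neg_zero]
  have hcc : CD.inner (a * b) (a * b) = 1 := by
    rw [inner_mul_left, ha.conj_eq, neg_mul, hac, neg_neg, hbb]
  have sq_c : (a * b) * (a * b) = -e0 n := mul_self_eq_neg_e0_iff.mpr ⟨hc, hcc⟩
  refine ⟨sq_a, sq_b, sq_c, rfl, hba, ?_, hcb, ?_, hac⟩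
  · rw [hc.mul_comm_eq_neg hb hcb', hcb, neg_neg]
  · rw [ha.mul_comm_eq_neg hc (by rwa [inner_comm]), hac, neg_neg]

end QuaternionTriples

section Quaternions

lemma quaternion_assoc_eq_zero (x y z : CD 2) : assoc x y z = 0 := by
  rw [assoc, sub_eq_zero]
  ext <;> simp <;> ring

lemma octonion_assoc_self_eq_zero (x y : CD 3) : assoc x x y = 0 ∧ assoc x y y = 0 := by
  simp only [assoc, sub_eq_zero]
  constructor <;> ext <;>
    simp only [mul_fst, mul_snd, add_fst, add_snd, sub_fst, sub_snd, neg_fst, neg_snd, conj_fst,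
      conj_snd, conj_zero_eq, toReal_mul, toReal_add, toReal_sub, toReal_neg] <;> ring

@[simp] lemma q1_fst : q1.1 = te0 1 := rfl
@[simp] lemma q1_snd : q1.2 = 0 := rfl
@[simp] lemma q2_fst : q2.1 = 0 := rfl
@[simp] lemma q2_snd : q2.2 = e0 1 := rfl
@[simp] lemma q3_fst : q3.1 = 0 := rfl
@[simp] lemma q3_snd : q3.2 = te0 1 := rfl

lemma q1_mul_q1 : q1 * q1 = -e0 2 := by ext <;> simp
lemma q2_mul_q2 : q2 * q2 = -e0 2 := by ext <;> simp
lemma q1_mul_q2 : q1 * q2 = q3 := by ext <;> simp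
lemma q2_mul_q1 : q2 * q1 = -q3 := by ext <;> simp

/-- The linear map `ℍ → A_n` sending the basis `e₀, e₁, e₂, e₃` of `ℍ = A_2` to `e₀, a, b, c`. -/
def quatMap (a b c : CD n) : CD 2 →ₗ[ℝ] CD n where
  toFun x := toReal x.1.1 • e0 n + toReal x.1.2 • a + toReal x.2.1 • b + toReal x.2.2 • c
  map_add' x y := by simp only [add_fst, add_snd, toReal_add, add_smul]; abel
  map_smul' r x := by
    simp only [smul_fst, smul_snd, toReal_smul, mul_smul, smul_add, RingHom.id_apply]

lemma quatMap_apply (a b c : CD n) (x : CD 2) : quatMap a b c x =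
    toReal x.1.1 • e0 n + toReal x.1.2 • a + toReal x.2.1 • b + toReal x.2.2 • c := rfl

@[simp] lemma quatMap_e0 (a b c : CD n) : quatMap a b c (e0 2) = e0 n := by
  simp [quatMap_apply]

@[simp] lemma quatMap_q1 (a b c : CD n) : quatMap a b c q1 = a := by
  simp [quatMap_apply]

@[simp] lemma quatMap_q2 (a b c : CD n) : quatMap a b c q2 = b := by
  simp [quatMap_apply]

lemma quatMap_basis : quatMap q1 q2 q3 = LinearMap.id := by
  refine LinearMap.ext fun x => ?_
  ext <;> simp [quatMap_apply]

lemma comp_quatMap {m : ℕ} (φ : CD m →ₗ[ℝ] CD n) (hφ : φ (e0 m) = e0 n) (a b c : CD m) :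
    φ ∘ₗ quatMap a b c = quatMap (φ a) (φ b) (φ c) :=
  LinearMap.ext fun x => by simp [quatMap_apply, hφ]

lemma eq_quatMap (φ : CD 2 →ₗ[ℝ] CD n) (hφ : φ (e0 2) = e0 n) :
    φ = quatMap (φ q1) (φ q2) (φ q3) := by
  rw [← comp_quatMap φ hφ, quatMap_basis, LinearMap.comp_id]

lemma quatMap_mul {a b c : CD n} (h : IsQuaternionTriple a b c) (x y : CD 2) :
    quatMap a b c (x * y) = quatMap a b c x * quatMap a b c y := by
  simp only [quatMap_apply, add_mul, mul_add, smul_mul_assoc, mul_smul_comm, e0_mul, mul_e0,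
    h.a_mul_a, h.b_mul_b, h.c_mul_c, h.a_mul_b, h.b_mul_a, h.b_mul_c, h.c_mul_b, h.c_mul_a,
    h.a_mul_c, mul_fst, mul_snd, add_fst, add_snd, sub_fst, sub_snd, conj_fst, conj_snd,
    conj_zero_eq, toReal_mul, toReal_add, toReal_sub, toReal_neg]
  module

end Quaternions

/-- A unital homomorphism out of `A_m` is injective, because `x x̄ = ‖x‖² e₀`. -/
lemma injective_of_map_mul {m : ℕ} (φ : CD m →ₗ[ℝ] CD n) (hφ : φ (e0 m) = e0 n)
    (hmul : ∀ x y, φ (x * y) = φ x * φ y) : Function.Injective φ := by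
  refine (injective_iff_map_eq_zero φ).mpr fun x hx => eq_zero_of_inner_self_eq_zero ?_
  refine eq_zero_of_smul_e0_eq_zero (n := n) ?_
  rw [← hφ, ← map_smul, ← mul_conj_self, hmul, hx, zero_mul]

lemma map_assoc {m : ℕ} (φ : CD m →ₗ[ℝ] CD n) (hmul : ∀ x y, φ (x * y) = φ x * φ y)
    (x y z : CD m) : φ (assoc x y z) = assoc (φ x) (φ y) (φ z) := by
  simp only [assoc, map_sub, hmul]

abbrev StronglyAlternatingV (n : ℕ) : Set (CD n × CD n) :=
  {p ∈ V n | CD.assoc p.1 p.1 p.2 = 0 ∧ CD.assoc p.1 p.2 p.2 = 0}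

lemma mapsTo_isMono (n : ℕ) :
    Set.MapsTo (fun φ : CD 2 →ₗ[ℝ] CD n => (φ q1, φ q2)) {φ | IsMono φ}
      (StronglyAlternatingV n) := by
  rintro φ ⟨-, hφ, hmul⟩
  have sq_a : φ q1 * φ q1 = -e0 n := by rw [← hmul, q1_mul_q1, map_neg, hφ]
  have sq_b : φ q2 * φ q2 = -e0 n := by rw [← hmul, q2_mul_q2, map_neg, hφ]
  obtain ⟨ha, haa⟩ := mul_self_eq_neg_e0_iff.mp sq_a
  obtain ⟨hb, hbb⟩ := mul_self_eq_neg_e0_iff.mp sq_b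
  have hab : CD.inner (φ q1) (φ q2) = 0 := by
    have h := ha.mul_add_mul_comm hb
    rw [← hmul, ← hmul, ← map_add, q1_mul_q2, q2_mul_q1, add_neg_cancel, map_zero,
      eq_comm, neg_eq_zero] at h
    linarith [eq_zero_of_smul_e0_eq_zero h]
  refine ⟨⟨ha, hb, norm_eq_one_iff.mpr haa, norm_eq_one_iff.mpr hbb, hab⟩, ?_, ?_⟩ <;>
    rw [← map_assoc φ hmul, quaternion_assoc_eq_zero, map_zero]

lemma injOn_isMono (n : ℕ) :
    Set.InjOn (fun φ : CD 2 →ₗ[ℝ] CD n => (φ q1, φ q2)) {φ | IsMono φ} := by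
  rintro φ ⟨-, hφ, hφmul⟩ ψ ⟨-, hψ, hψmul⟩ h
  obtain ⟨h₁, h₂⟩ := Prod.ext_iff.mp h
  rw [eq_quatMap φ hφ, eq_quatMap ψ hψ, ← q1_mul_q2, hφmul, hψmul]
  simp only at h₁ h₂
  rw [h₁, h₂]

lemma surjOn_isMono (n : ℕ) :
    Set.SurjOn (fun φ : CD 2 →ₗ[ℝ] CD n => (φ q1, φ q2)) {φ | IsMono φ}
      (StronglyAlternatingV n) := by
  rintro ⟨a, b⟩ ⟨⟨ha, hb, haa, hbb, hab⟩, h₁, h₂⟩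
  have hT :=
    isQuaternionTriple_mul ha hb (norm_eq_one_iff.mp haa) (norm_eq_one_iff.mp hbb) hab h₁ h₂
  refine ⟨quatMap a b (a * b), ⟨?_, quatMap_e0 a b _, quatMap_mul hT⟩, by simp⟩
  exact injective_of_map_mul _ (quatMap_e0 a b _) (quatMap_mul hT)

lemma bijOn_isMono (n : ℕ) :
    Set.BijOn (fun φ : CD 2 →ₗ[ℝ] CD n => (φ q1, φ q2)) {φ | IsMono φ}
      (StronglyAlternatingV n) :=
  ⟨mapsTo_isMono n, injOn_isMono n, surjOn_isMono n⟩

end CD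

theorem statement18_general (n : ℕ) :
    Set.BijOn (fun φ : CD 2 →ₗ[ℝ] CD n => (φ q1, φ q2))
      {φ | IsMono φ}
      {p ∈ V n | CD.assoc p.1 p.1 p.2 = 0 ∧ CD.assoc p.1 p.2 p.2 = 0} ∧
    (∀ x y : CD 2, CD.assoc x x y = 0 ∧ CD.assoc x y y = 0) ∧
    (∀ x y : CD 3, CD.assoc x x y = 0 ∧ CD.assoc x y y = 0) ∧
    Set.BijOn (fun φ : CD 2 →ₗ[ℝ] CD 2 => (φ q1, φ q2)) {φ | IsMono φ} (V 2) ∧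
    Set.BijOn (fun φ : CD 2 →ₗ[ℝ] CD 3 => (φ q1, φ q2)) {φ | IsMono φ} (V 3) := by
  have alt₂ : ∀ x y : CD 2, CD.assoc x x y = 0 ∧ CD.assoc x y y = 0 := fun x y =>
    ⟨CD.quaternion_assoc_eq_zero x x y, CD.quaternion_assoc_eq_zero x y y⟩
  have alt₃ := CD.octonion_assoc_self_eq_zero
  have V₂ : CD.StronglyAlternatingV 2 = V 2 :=
    Set.sep_eq_self_iff_mem_true.mpr fun p _ => alt₂ p.1 p.2
  have V₃ : CD.StronglyAlternatingV 3 = V 3 :=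
    Set.sep_eq_self_iff_mem_true.mpr fun p _ => alt₃ p.1 p.2
  exact ⟨CD.bijOn_isMono n, alt₂, alt₃, V₂ ▸ CD.bijOn_isMono 2, V₃ ▸ CD.bijOn_isMono 3⟩

/-- For `n ≥ 2`, `φ ↦ (φ(e₁), φ(e₂))` is a bijection from
`𝓜(A 2; A n)` onto `{(a,b) ∈ V_{2^n-1,2} : (a,a,b) = 0 ∧ (a,b,b) = 0}`.
In `A 2` and `A 3` every pair alternates strongly, so `Aut(A 2) = 𝓜(A 2; A 2)`
corresponds to `V_{3,2}` and `𝓜(A 2; A 3)` to `V_{7,2}`. -/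
theorem statement18 (n : ℕ) (hn : 2 ≤ n) :
    Set.BijOn (fun φ : CD 2 →ₗ[ℝ] CD n => (φ q1, φ q2))
      {φ | IsMono φ}
      {p ∈ V n | CD.assoc p.1 p.1 p.2 = 0 ∧ CD.assoc p.1 p.2 p.2 = 0} ∧
    (∀ x y : CD 2, CD.assoc x x y = 0 ∧ CD.assoc x y y = 0) ∧
    (∀ x y : CD 3, CD.assoc x x y = 0 ∧ CD.assoc x y y = 0) ∧
    Set.BijOn (fun φ : CD 2 →ₗ[ℝ] CD 2 => (φ q1, φ q2)) {φ | IsMono φ} (V 2) ∧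
    Set.BijOn (fun φ : CD 2 →ₗ[ℝ] CD 3 => (φ q1, φ q2)) {φ | IsMono φ} (V 3) :=
  statement18_general n
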